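/- Let 1 ≤ p < ∞ and let Ω₀ ⊂ ℤ² be such that Ω₀^c = {0}×ℤ₀. Then for every function M ∈ L^p(𝕋²), the system {M(x,y)e^{ikx}e^{imy} : (k,m) ∈ Ω₀} is not both complete and minimal in L^p(𝕋²). -/

import Mathlib

/-!
Let `x` be the member `M` (index `(0, 0)`) and `V` the closed span of the other members, the
functions `M e^{ikx} e^{imy}` with `k ≠ 0`. Multiplication by `e^{iy}` maps `V` into itself.
Minimality says `x ∉ V`; completeness then gives `V ⊕ ℂ x = L^p`, so `e^{iy}` acts on the
one-dimensional quotient `L^p / V` by a scalar `c`, i.e. `(e^{iy} - c) f ∈ V` for every `f`.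
But `e^{iy} - c` vanishes only on a null set, so multiplication by it has dense range in `L^p`
(`p < ∞`, via truncated inverses and dominated convergence). Hence `V = L^p ∋ x`.
-/

open MeasureTheory Complex Real ComplexConjugate
open scoped ENNReal NNReal

noncomputable section

instance : Fact (0 < 2 * Real.pi) := ⟨by positivity⟩

/-- The circle `𝕋 = ℝ/2πℤ`, equipped with Lebesgue measure (total measure `2π`). -/
abbrev 𝕋 : Type := AddCircle (2 * Real.pi)

/-- The exponential `e k x = exp (i k x)` on `𝕋`. -/
noncomputable def e (k : ℤ) (x : 𝕋) : ℂ := fourier k x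

/-- A system of functions is complete in `L^p` if the closed linear span (inside `L^p`)
of its members equals the whole space. -/
def IsCompleteSystem {α : Type*} [MeasureSpace α] (p : ℝ≥0∞) [Fact (1 ≤ p)] {ι : Type*}
    (f : ι → α → ℂ) : Prop :=
  (Submodule.span ℂ {h : Lp ℂ p (volume : Measure α) |
      ∃ i : ι, (h : α → ℂ) =ᵐ[volume] f i}).topologicalClosure = ⊤

/-- A system of functions is minimal in `L^p` if no element belongs to the closed
linear span of the remaining elements. -/
def IsMinimalSystem {α : Type*} [MeasureSpace α] (p : ℝ≥0∞) [Fact (1 ≤ p)] {ι : Type*}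
    (f : ι → α → ℂ) : Prop :=
  ∀ i : ι, ∀ g : Lp ℂ p (volume : Measure α), (g : α → ℂ) =ᵐ[volume] f i →
    g ∉ (Submodule.span ℂ {h : Lp ℂ p (volume : Measure α) |
      ∃ j : ι, j ≠ i ∧ (h : α → ℂ) =ᵐ[volume] f j}).topologicalClosure

open Filter Topology

instance AddCircle.nullSingletonClass_volume {T : ℝ} [Fact (0 < T)] :
    NullSingletonClass (volume : Measure (AddCircle T)) :=
  ⟨fun x => by simpa [Metric.closedBall_zero] using AddCircle.volume_closedBall T (x := x) 0⟩

theorem AddCircle.ae_fourier_one_ne {T : ℝ} [hT : Fact (0 < T)] (c : ℂ) :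
    ∀ᵐ y : AddCircle T, fourier 1 y ≠ c := by
  refine ae_iff.2 (Set.Subsingleton.measure_zero (fun y₁ h₁ y₂ h₂ => ?_) _)
  apply AddCircle.injective_toCircle hT.out.ne'
  ext
  simp_all

section ClosedInvariantSubspace

variable {𝕜 E : Type*}

theorem Submodule.exists_forall_sub_smul_mem_of_sup_span_eq_top [CommRing 𝕜] [AddCommGroup E]
    [Module 𝕜 E] {V : Submodule 𝕜 E} {x : E} (hVx : V ⊔ 𝕜 ∙ x = ⊤) {T : E →ₗ[𝕜] E}
    (hT : ∀ v ∈ V, T v ∈ V) : ∃ c : 𝕜, ∀ y, T y - c • y ∈ V := by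
  have hdecomp (y : E) : ∃ v ∈ V, ∃ a : 𝕜, v + a • x = y := by
    obtain ⟨v, hv, w, hw, rfl⟩ := Submodule.mem_sup.1 (hVx ▸ Submodule.mem_top : y ∈ V ⊔ 𝕜 ∙ x)
    obtain ⟨a, rfl⟩ := Submodule.mem_span_singleton.1 hw
    exact ⟨v, hv, a, rfl⟩
  obtain ⟨v₀, hv₀, c, hTx⟩ := hdecomp (T x)
  refine ⟨c, fun y => ?_⟩
  obtain ⟨v, hv, a, rfl⟩ := hdecomp y
  have : T (v + a • x) - c • (v + a • x) = (T v - c • v) + a • v₀ := by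
    rw [map_add, map_smul, ← hTx, smul_add, smul_add, smul_comm c a]
    abel
  rw [this]
  exact V.add_mem (V.sub_mem (hT v hv) (V.smul_mem c hv)) (V.smul_mem a hv₀)

variable [NontriviallyNormedField 𝕜] [CompleteSpace 𝕜] [AddCommGroup E] [TopologicalSpace E]
  [IsTopologicalAddGroup E] [Module 𝕜 E] [ContinuousSMul 𝕜 E]

theorem Submodule.eq_top_of_invariant_of_denseRange_sub_smul {V : Submodule 𝕜 E}
    (hV : IsClosed (V : Set E)) {x : E} (hVx : (V ⊔ 𝕜 ∙ x).topologicalClosure = ⊤)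
    {T : E →L[𝕜] E} (hT : ∀ v ∈ V, T v ∈ V)
    (hdense : ∀ c : 𝕜, DenseRange (T - c • ContinuousLinearMap.id 𝕜 E)) : V = ⊤ := by
  have hclosed := Submodule.isClosed_sup_finiteDimensional V (𝕜 ∙ x) hV
  obtain ⟨c, hc⟩ := Submodule.exists_forall_sub_smul_mem_of_sup_span_eq_top
    (hclosed.submodule_topologicalClosure_eq ▸ hVx) (T := T.toLinearMap) hT
  have hrange : Set.range (T - c • ContinuousLinearMap.id 𝕜 E) ⊆ V := by
    rintro _ ⟨y, rfl⟩
    exact hc y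
  rw [eq_top_iff, ← SetLike.coe_subset_coe, Submodule.top_coe, ← (hdense c).closure_range]
  exact closure_minimal hrange hV

end ClosedInvariantSubspace

section TruncatedInverse

variable {𝕜 : Type*} [RCLike 𝕜]

def truncInv (n : ℕ) (z : 𝕜) : 𝕜 := if ((n : ℝ) + 1)⁻¹ ≤ ‖z‖ then z⁻¹ else 0

theorem measurable_truncInv (n : ℕ) : Measurable (truncInv (𝕜 := 𝕜) n) :=
  Measurable.ite (measurableSet_le measurable_const measurable_norm) measurable_inv measurable_const

theorem norm_truncInv_le (n : ℕ) (z : 𝕜) : ‖truncInv n z‖ ≤ n + 1 := by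
  unfold truncInv
  split_ifs with h
  · rw [norm_inv]
    exact inv_le_of_inv_le₀ (by positivity) h
  · simp only [norm_zero]
    positivity

theorem norm_mul_truncInv_le_one (n : ℕ) (z : 𝕜) : ‖z * truncInv n z‖ ≤ 1 := by
  unfold truncInv
  split_ifs with h
  · rw [mul_inv_cancel₀ (norm_pos_iff.1 (lt_of_lt_of_le (by positivity) h)), norm_one]
  · simp

theorem tendsto_mul_truncInv {z : 𝕜} (hz : z ≠ 0) :
    Tendsto (fun n => z * truncInv n z) atTop (𝓝 1) := by
  have hsmall : ∀ᶠ n : ℕ in atTop, ((n : ℝ) + 1)⁻¹ ≤ ‖z‖ := by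
    have := tendsto_one_div_add_atTop_nhds_zero_nat (𝕜 := ℝ)
    simpa only [one_div] using this.eventually (ge_mem_nhds (norm_pos_iff.2 hz))
  refine tendsto_const_nhds.congr' (hsmall.mono fun n hn => ?_)
  simp [truncInv, hn, hz]

end TruncatedInverse

section LpMultiplication

variable {α : Type*} [MeasurableSpace α] {μ : Measure α} {p : ℝ≥0∞}

theorem unifIntegrable_of_dominated {ι β γ : Type*} [NormedAddCommGroup β] [NormedAddCommGroup γ]
    {f : ι → α → β} {g : α → γ} (hp : 1 ≤ p) (hp' : p ≠ ∞) (hg : MemLp g p μ)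
    (hfg : ∀ i, ∀ᵐ x ∂μ, ‖f i x‖ ≤ ‖g x‖) : UnifIntegrable f p μ := by
  intro ε hε
  obtain ⟨δ, hδ, hgδ⟩ := unifIntegrable_const (ι := Unit) hp hp' hg hε
  refine ⟨δ, hδ, fun i s hs hμs => (eLpNorm_mono_ae ?_).trans (hgδ () s hs hμs)⟩
  filter_upwards [hfg i] with x hx
  by_cases hxs : x ∈ s <;> simp [hxs, hx]

theorem tendsto_eLpNorm_smul_sub_of_tendsto_ae_one [IsFiniteMeasure μ] {𝕜 E : Type*}
    [NormedField 𝕜] [NormedAddCommGroup E] [NormedSpace 𝕜 E] (hp : 1 ≤ p) (hp' : p ≠ ∞)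
    {f : α → E} (hf : MemLp f p μ) {h : ℕ → α → 𝕜} (hh : ∀ n, AEStronglyMeasurable (h n) μ)
    (hle : ∀ n, ∀ᵐ x ∂μ, ‖h n x‖ ≤ 1) (hlim : ∀ᵐ x ∂μ, Tendsto (fun n => h n x) atTop (𝓝 1)) :
    Tendsto (fun n => eLpNorm (fun x => h n x • f x - f x) p μ) atTop (𝓝 0) := by
  refine tendsto_Lp_finite_of_tendsto_ae hp hp' (fun n => (hh n).smul hf.1) hf
    (unifIntegrable_of_dominated hp hp' hf fun n => ?_) ?_
  · filter_upwards [hle n] with x hx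
    rw [norm_smul]
    exact mul_le_of_le_one_left (norm_nonneg _) hx
  · filter_upwards [hlim] with x hx
    simpa using hx.smul_const (f x)

namespace MeasureTheory.Lp

variable {𝕜 : Type*} [RCLike 𝕜] [Fact (1 ≤ p)]

variable (p) in
def mulL (g : Lp 𝕜 ∞ μ) : Lp 𝕜 p μ →L[𝕜] Lp 𝕜 p μ :=
  (ContinuousLinearMap.mul 𝕜 𝕜).holderL μ ∞ p p g

theorem coeFn_mulL (g : Lp 𝕜 ∞ μ) (f : Lp 𝕜 p μ) :
    mulL p g f =ᵐ[μ] fun x => g x * f x :=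
  ContinuousLinearMap.coeFn_holder _ g f

theorem denseRange_mulL_sub_smul [IsFiniteMeasure μ] (hp : p ≠ ∞) {g : Lp 𝕜 ∞ μ} {c : 𝕜}
    (hg : ∀ᵐ x ∂μ, g x ≠ c) :
    DenseRange (mulL p g - c • ContinuousLinearMap.id 𝕜 (Lp 𝕜 p μ)) := by
  set T := mulL p g - c • ContinuousLinearMap.id 𝕜 (Lp 𝕜 p μ)
  have hT (f : Lp 𝕜 p μ) : T f =ᵐ[μ] fun x => (g x - c) * f x := by
    filter_upwards [coeFn_sub (mulL p g f) (c • f), coeFn_mulL g f, coeFn_smul c f]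
      with x hsub hmul hsmul
    change ((mulL p g f - c • f : Lp 𝕜 p μ) : α → 𝕜) x = _
    rw [hsub, Pi.sub_apply, hmul, hsmul, Pi.smul_apply, smul_eq_mul, sub_mul]
  have hgc : AEStronglyMeasurable (fun x => g x - c) μ :=
    (Lp.aestronglyMeasurable g).sub aestronglyMeasurable_const
  let w (n : ℕ) : Lp 𝕜 ∞ μ := MemLp.toLp _ <| memLp_top_of_bound
    ((measurable_truncInv n).comp_aemeasurable hgc.aemeasurable).aestronglyMeasurable (n + 1)
    (ae_of_all _ fun x => norm_truncInv_le n (g x - c))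
  have hw (n : ℕ) : w n =ᵐ[μ] fun x => truncInv n (g x - c) := MemLp.coeFn_toLp _
  intro f
  refine mem_closure_of_tendsto (f := fun n => T (mulL p (w n) f)) (b := atTop) ?_
    (Eventually.of_forall fun n => ⟨_, rfl⟩)
  rw [tendsto_Lp_iff_tendsto_eLpNorm']
  refine (tendsto_eLpNorm_smul_sub_of_tendsto_ae_one Fact.out hp (Lp.memLp f)
    (h := fun n x => (g x - c) * truncInv n (g x - c)) (fun n => ?_)
    (fun n => ae_of_all _ fun x => norm_mul_truncInv_le_one n _) ?_).congr fun n => ?_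
  · exact hgc.mul ((measurable_truncInv n).comp_aemeasurable hgc.aemeasurable).aestronglyMeasurable
  · filter_upwards [hg] with x hx
    exact tendsto_mul_truncInv (sub_ne_zero.2 hx)
  · refine eLpNorm_congr_ae ?_
    filter_upwards [hT (mulL p (w n) f), coeFn_mulL (w n) f, hw n] with x h1 h2 h3
    simp [h1, h2, h3, smul_eq_mul, mul_assoc]

end MeasureTheory.Lp

end LpMultiplication

section Systems

variable {α : Type*} [MeasureSpace α] {p : ℝ≥0∞} [Fact (1 ≤ p)] {ι : Type*}

variable (p) in
def closedSpanExcept (f : ι → α → ℂ) (i₀ : ι) : Submodule ℂ (Lp ℂ p (volume : Measure α)) :=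
  (Submodule.span ℂ {h : Lp ℂ p (volume : Measure α) |
    ∃ j : ι, j ≠ i₀ ∧ (h : α → ℂ) =ᵐ[volume] f j}).topologicalClosure

theorem IsCompleteSystem.closedSpanExcept_sup_dense {f : ι → α → ℂ} (hf : IsCompleteSystem p f)
    {i₀ : ι} {x : Lp ℂ p (volume : Measure α)} (hx : (x : α → ℂ) =ᵐ[volume] f i₀) :
    (closedSpanExcept p f i₀ ⊔ ℂ ∙ x).topologicalClosure = ⊤ := by
  refine eq_top_iff.2 (hf.symm.le.trans (Submodule.topologicalClosure_mono ?_))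
  rw [Submodule.span_le]
  rintro h ⟨i, hi⟩
  by_cases hii₀ : i = i₀
  · subst hii₀
    rw [Lp.ext (hi.trans hx.symm)]
    exact Submodule.mem_sup_right (Submodule.mem_span_singleton_self x)
  · exact Submodule.mem_sup_left
      (Submodule.le_topologicalClosure _ (Submodule.subset_span ⟨i, hii₀, hi⟩))

theorem not_isCompleteSystem_and_isMinimalSystem_of_mul_invariant
    [IsFiniteMeasure (volume : Measure α)] (hp : p ≠ ∞) {f : ι → α → ℂ} {i₀ : ι}
    (hf₀ : MemLp (f i₀) p volume) {u : α → ℂ} (hu : MemLp u ∞ volume)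
    (hu_ne : ∀ c : ℂ, ∀ᵐ x, u x ≠ c)
    (hshift : ∀ i ≠ i₀, ∃ j ≠ i₀, (fun x => u x * f i x) =ᵐ[volume] f j) :
    ¬ (IsCompleteSystem p f ∧ IsMinimalSystem p f) := by
  rintro ⟨hcomplete, hminimal⟩
  set V := closedSpanExcept p f i₀
  set T := Lp.mulL p (hu.toLp u)
  have hTV : ∀ v ∈ V, T v ∈ V := by
    refine Set.MapsTo.closure (Set.MapsTo.submoduleSpan (f := T.toLinearMap) ?_) T.continuous
    rintro h ⟨i, hi, hh⟩
    obtain ⟨j, hj, hufj⟩ := hshift i hi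
    refine ⟨j, hj, ?_⟩
    filter_upwards [Lp.coeFn_mulL (hu.toLp u) h, hu.coeFn_toLp, hh, hufj] with x h1 h2 h3 h4
    exact h1.trans (by rw [h2, h3, h4])
  have hu_ne' (c : ℂ) : ∀ᵐ x, hu.toLp u x ≠ c := by
    filter_upwards [hu.coeFn_toLp, hu_ne c] with x h1 h2
    rwa [h1]
  have hV : V = ⊤ := Submodule.eq_top_of_invariant_of_denseRange_sub_smul
    (Submodule.isClosed_topologicalClosure _)
    (hcomplete.closedSpanExcept_sup_dense hf₀.coeFn_toLp) hTV
    fun c => Lp.denseRange_mulL_sub_smul hp (hu_ne' c)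
  exact hminimal i₀ _ hf₀.coeFn_toLp (show _ ∈ V from hV ▸ Submodule.mem_top)

end Systems

theorem mem_iff_of_compl_eq_zero_prod_ne_zero {Ω₀ : Set (ℤ × ℤ)}
    (hΩc : Ω₀ᶜ = {(0 : ℤ)} ×ˢ {n : ℤ | n ≠ 0}) {km : ℤ × ℤ} : km ∈ Ω₀ ↔ km.1 ≠ 0 ∨ km.2 = 0 := by
  rw [← compl_compl Ω₀, hΩc]
  simp only [Set.mem_compl_iff, Set.mem_prod, Set.mem_singleton_iff, Set.mem_ofPred_eq]
  tauto

/-- Proposition 3.13: for `Ω₀ᶜ = {0} × ℤ₀`, the system is never both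
complete and minimal in `L^p(𝕋²)`, whatever `M ∈ L^p(𝕋²)` is. -/
theorem statement14 (p : ℝ≥0∞) [hp1 : Fact (1 ≤ p)] (hp2 : p ≠ ⊤)
    (Ω₀ : Set (ℤ × ℤ)) (hΩc : Ω₀ᶜ = {(0 : ℤ)} ×ˢ {n : ℤ | n ≠ 0})
    (M : 𝕋 × 𝕋 → ℂ) (hM : MemLp M p volume) :
    ¬ (IsCompleteSystem p (fun km : Ω₀ => fun z : 𝕋 × 𝕋 =>
      M z * e (km : ℤ × ℤ).1 z.1 * e (km : ℤ × ℤ).2 z.2) ∧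
       IsMinimalSystem p (fun km : Ω₀ => fun z : 𝕋 × 𝕋 =>
      M z * e (km : ℤ × ℤ).1 z.1 * e (km : ℤ × ℤ).2 z.2)) := by
  have hmem := @mem_iff_of_compl_eq_zero_prod_ne_zero Ω₀ hΩc
  refine not_isCompleteSystem_and_isMinimalSystem_of_mul_invariant hp2
    (i₀ := ⟨(0, 0), hmem.2 (Or.inr rfl)⟩) (u := fun z => e 1 z.2) ?_ ?_
    (fun c => Measure.quasiMeasurePreserving_snd.ae (AddCircle.ae_fourier_one_ne c)) ?_
  · simpa [e] using hM
  · exact memLp_top_of_bound ((fourier 1).continuous.comp continuous_snd).aestronglyMeasurable 1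
      (ae_of_all _ fun z => by simp [e, Circle.norm_coe])
  · rintro ⟨⟨k, m⟩, hkm⟩ hne
    have hk : k ≠ 0 := by
      rintro rfl
      obtain rfl : m = 0 := (hmem.1 hkm).resolve_left (not_not.2 rfl)
      exact hne rfl
    refine ⟨⟨(k, m + 1), hmem.2 (Or.inl hk)⟩, fun h => hk (congrArg (fun i => i.1.1) h), ?_⟩
    refine Eventually.of_forall fun z => ?_
    simp only [e, fourier_add]
    ring
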